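/- Let G be a finite simple graph and x, y distinct non-adjacent vertices, and let Ĝ be the graph obtained by adding the edge {x,y}. Then the edge {x,y} has Property P in Ĝ if and only if no minimal vertex cover of G contains both x and y. -/

import Mathlib

/-! A vertex `x` of a minimal vertex cover `X` has a neighbour outside `X`, since otherwise
`X \ {x}` would still be a cover. Conversely, if `a` and `b` are non-adjacent, the complement of
`{a, b}` is a cover, and by Zorn's lemma it contains a minimal one, which avoids `a` and `b`. Hence
a minimal cover containing `x` and `y` exists exactly when some neighbour of `x` and some neighbour
of `y` are non-adjacent in `G`, which is exactly the failure of Property P for the new edge. -/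

/-- `X` is a vertex cover of `G`: every edge has an endpoint in `X`. -/
def SimpleGraph.IsVertexCover' {V : Type*} (G : SimpleGraph V) (X : Set V) : Prop :=
  ∀ ⦃u v : V⦄, G.Adj u v → u ∈ X ∨ v ∈ X

/-- `X` is a minimal vertex cover of `G`. -/
def SimpleGraph.IsMinVertexCover {V : Type*} (G : SimpleGraph V) (X : Set V) : Prop :=
  G.IsVertexCover' X ∧ ∀ Y ⊆ X, G.IsVertexCover' Y → Y = X

/-- An edge `{x,y}` is regular: no minimal vertex cover contains both endpoints. -/
def SimpleGraph.IsRegularEdge {V : Type*} (G : SimpleGraph V) (x y : V) : Prop :=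
  ∀ X : Set V, G.IsMinVertexCover X → ¬(x ∈ X ∧ y ∈ X)

/-- Property P for an edge `{x,y}` of a simple graph. -/
def SimpleGraph.HasPropertyP {V : Type*} (G : SimpleGraph V) (x y : V) : Prop :=
  ∀ a b : V, G.Adj a x → a ≠ y → G.Adj y b → b ≠ x → a ≠ b ∧ G.Adj a b

namespace SimpleGraph

variable {V : Type*} {G : SimpleGraph V}

theorem isMinVertexCover_iff_minimal {X : Set V} :
    G.IsMinVertexCover X ↔ Minimal G.IsVertexCover X :=
  ⟨fun h => ⟨h.1, fun Y hY hYX => (h.2 Y hYX hY).ge⟩,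
    fun h => ⟨h.1, fun _ hYX hY => h.eq_of_subset hY hYX⟩⟩

theorem IsMinVertexCover.exists_adj_notMem {X : Set V} (hX : G.IsMinVertexCover X) {x : V}
    (hx : x ∈ X) : ∃ a, G.Adj x a ∧ a ∉ X := by
  by_contra! hN
  have hcover : G.IsVertexCover (X \ {x}) := fun u v huv => by
    have := hX.1 huv
    grind [hN u, hN v, huv.ne, huv.symm]
  exact (Set.sdiff_singleton_ssubset.2 hx).ne (hX.2 _ Set.sdiff_subset hcover)

theorem isVertexCover_sInter_of_isChain {S : Set (Set V)} (hS : ∀ c ∈ S, G.IsVertexCover c)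
    (hchain : IsChain (· ⊆ ·) S) : G.IsVertexCover (⋂₀ S) := by
  intro v w hvw
  by_contra! h
  simp only [Set.mem_sInter, not_forall] at h
  obtain ⟨⟨c, hc, hvc⟩, ⟨d, hd, hwd⟩⟩ := h
  rcases hchain.total hc hd with hcd | hdc
  · exact (hS c hc hvw).elim hvc (fun hwc => hwd (hcd hwc))
  · exact (hS d hd hvw).elim (fun hvd => hvc (hdc hvd)) hwd

theorem IsVertexCover.exists_isMinVertexCover_subset {c : Set V} (hc : G.IsVertexCover c) :
    ∃ X ⊆ c, G.IsMinVertexCover X := by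
  obtain ⟨X, hXc, hX⟩ := zorn_superset_nonempty {c | G.IsVertexCover c}
    (fun S hS hchain _ =>
      ⟨⋂₀ S, isVertexCover_sInter_of_isChain hS hchain, fun _ => Set.sInter_subset_of_mem⟩) c hc
  exact ⟨X, hXc, isMinVertexCover_iff_minimal.2 hX⟩

theorem fromEdgeSet_union_adj_of_ne {x y u v : V} (hux : u ≠ x) (huy : u ≠ y) :
    (fromEdgeSet (G.edgeSet ∪ {s(x, y)})).Adj u v ↔ G.Adj u v := by
  simp only [fromEdgeSet_adj, Set.mem_union, mem_edgeSet, Set.mem_singleton_iff, Sym2.eq_iff,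
    hux, huy, false_and, or_false]
  exact ⟨And.left, fun h => ⟨h, h.ne⟩⟩

theorem hasPropertyP_fromEdgeSet_union_iff {x y : V} (hnadj : ¬G.Adj x y) :
    (fromEdgeSet (G.edgeSet ∪ {s(x, y)})).HasPropertyP x y ↔
      ∀ a b, G.Adj a x → G.Adj y b → G.Adj a b := by
  constructor
  · intro hP a b hax hyb
    have hay : a ≠ y := by rintro rfl; exact hnadj hax.symm
    have hbx : b ≠ x := by rintro rfl; exact hnadj hyb.symm
    have hxb := (fromEdgeSet_union_adj_of_ne hbx hyb.ne').2 hyb.symm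
    exact (fromEdgeSet_union_adj_of_ne hax.ne hay).1
      (hP a b ((fromEdgeSet_union_adj_of_ne hax.ne hay).2 hax) hay hxb.symm hbx).2
  · intro h a b hax hay hyb hbx
    have hab := h a b ((fromEdgeSet_union_adj_of_ne hax.ne hay).1 hax)
      ((fromEdgeSet_union_adj_of_ne hbx hyb.ne').1 hyb.symm).symm
    exact ⟨hab.ne, (fromEdgeSet_union_adj_of_ne hax.ne hay).2 hab⟩

end SimpleGraph

theorem propertyP_added_edge_iff_general {V : Type*}
    (G : SimpleGraph V) (x y : V) (hnadj : ¬ G.Adj x y) :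
    (SimpleGraph.fromEdgeSet (G.edgeSet ∪ {s(x, y)})).HasPropertyP x y ↔
      ∀ X : Set V, G.IsMinVertexCover X → ¬(x ∈ X ∧ y ∈ X) := by
  rw [SimpleGraph.hasPropertyP_fromEdgeSet_union_iff hnadj]
  constructor
  · rintro hP X hX ⟨hx, hy⟩
    obtain ⟨a, hxa, ha⟩ := hX.exists_adj_notMem hx
    obtain ⟨b, hyb, hb⟩ := hX.exists_adj_notMem hy
    exact (hX.1 (hP a b hxa.symm hyb)).elim ha hb
  · intro hreg a b hax hyb
    by_contra hab
    have hcover : G.IsVertexCover {a, b}ᶜ :=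
      SimpleGraph.isVertexCover_compl.2 (Set.pairwise_pair.2 fun _ => ⟨hab, fun h => hab h.symm⟩)
    obtain ⟨X, hXab, hX⟩ := hcover.exists_isMinVertexCover_subset
    have hx : x ∈ X := (hX.1 hax).resolve_left fun haX => hXab haX (by simp)
    have hy : y ∈ X := (hX.1 hyb).resolve_right fun hbX => hXab hbX (by simp)
    exact hreg X hX ⟨hx, hy⟩

/-- for distinct non-adjacent `x, y`, the added edge `{x,y}` has
Property P in `Ĝ` iff no minimal vertex cover of `G` contains both `x` and `y`. -/
theorem propertyP_added_edge_iff {V : Type*} [Fintype V]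
    (G : SimpleGraph V) (x y : V) (hne : x ≠ y) (hnadj : ¬ G.Adj x y) :
    (SimpleGraph.fromEdgeSet (G.edgeSet ∪ {s(x, y)})).HasPropertyP x y ↔
      ∀ X : Set V, G.IsMinVertexCover X → ¬(x ∈ X ∧ y ∈ X) :=
  propertyP_added_edge_iff_general G x y hnadj
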